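/- arXiv:2403.10345 — 4 statements merged into one kernel-verified Lean document; each statement's English description precedes it below -/
import Mathlib

section
/- Let A = c(uvᵀ − I) be an n×n real matrix with u, v ∈ ℝⁿ and c ∈ ℝ. Then for all i ≠ j, the (i,j) minor of A (the determinant of A with the i-th row and j-th column deleted) equals (−1)^{n−1+i+j} c^{n−1} u_j v_i. -/
/-!
Write `B = u vᵀ` and `N` for the size. Since `B² = (u ⬝ v) B`, the matrix `B + (t - u ⬝ v) I`
inverts `t I - B` up to the scalar `t (t - u ⬝ v)`. Over `R[t]` the determinant of `t I - B` is
the characteristic polynomial `t ^ (N - 1) (t - u ⬝ v)`, which is monic and hence cancellable, so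
`adj (t I - B) = t ^ (N - 2) (B + (t - u ⬝ v) I)` holds as a polynomial identity and may be
evaluated at `t = 1`. As `A = -c (I - B)`, the off-diagonal entries of `adj A` are
`(-c) ^ (N - 1) uⱼ vᵢ`, and the `(i, j)` minor is `(-1) ^ (i + j)` times the entry `(j, i)`.
-/

open Matrix Polynomial

namespace Matrix

variable {n R : Type*} [Fintype n] [DecidableEq n] [CommRing R]

theorem adjugate_eq_of_mul_eq_det_smul {A B : Matrix n n R} (hdet : IsLeftRegular A.det)
    (hAB : A * B = A.det • (1 : Matrix n n R)) : adjugate A = B := by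
  have h : A.det • adjugate A = A.det • B := by
    rw [← Matrix.mul_one (adjugate A), ← Matrix.mul_smul, ← hAB, ← Matrix.mul_assoc,
      adjugate_mul, Matrix.smul_mul, Matrix.one_mul]
  ext i j
  exact hdet (congrFun (congrFun h i) j)

theorem scalar_sub_mul_add_smul_one_of_mul_self {B : Matrix n n R} {t : R}
    (hB : B * B = t • B) (s : R) :
    (scalar n s - B) * (B + (s - t) • (1 : Matrix n n R)) = (s * (s - t)) • 1 := by
  rw [scalar_apply, ← smul_one_eq_diagonal, sub_mul, mul_add, mul_add, hB]
  simp only [Matrix.smul_mul, Matrix.mul_smul, Matrix.one_mul, Matrix.mul_one, smul_smul]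
  module

theorem adjugate_charmatrix_vecMulVec (u v : n → R) (hn : 2 ≤ Fintype.card n) :
    adjugate (charmatrix (vecMulVec u v)) = (X ^ (Fintype.card n - 2) : R[X]) •
      ((C : R →+* R[X]).mapMatrix (vecMulVec u v) + (X - C (u ⬝ᵥ v)) • 1) := by
  refine adjugate_eq_of_mul_eq_det_smul (charpoly_monic _).isRegular.left ?_
  have hsq : (C : R →+* R[X]).mapMatrix (vecMulVec u v) *
      (C : R →+* R[X]).mapMatrix (vecMulVec u v) =
        C (u ⬝ᵥ v) • (C : R →+* R[X]).mapMatrix (vecMulVec u v) := by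
    rw [← map_mul, vecMulVec_mul_vecMulVec, vecMulVec_smul, dotProduct_comm]
    ext i j
    simp
  rw [← charpoly, charpoly_vecMulVec, charmatrix, Matrix.mul_smul,
    scalar_sub_mul_add_smul_one_of_mul_self hsq, smul_smul]
  congr 1
  obtain ⟨k, hk⟩ := Nat.exists_eq_add_of_le' hn
  rw [hk, Nat.add_sub_cancel, show k + 2 - 1 = k + 1 by omega, smul_eq_C_mul]
  ring

theorem adjugate_scalar_sub_vecMulVec (u v : n → R) (hn : 2 ≤ Fintype.card n) (t : R) :
    adjugate (scalar n t - vecMulVec u v) =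
      t ^ (Fintype.card n - 2) • (vecMulVec u v + (t - u ⬝ᵥ v) • 1) := by
  have h := congrArg (evalRingHom t).mapMatrix (adjugate_charmatrix_vecMulVec u v hn)
  rw [RingHom.map_adjugate] at h
  convert h using 2
  · ext i j
    by_cases hij : i = j <;> simp [hij]
  · ext i j
    by_cases hij : i = j <;> simp [hij] <;> ring

theorem det_submatrix_succAbove_eq_adjugate {m : ℕ} (A : Matrix (Fin (m + 1)) (Fin (m + 1)) R)
    (i j : Fin (m + 1)) :
    (A.submatrix i.succAbove j.succAbove).det = (-1) ^ (i + j : ℕ) * adjugate A j i := by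
  rw [adjugate_fin_succ_eq_det_submatrix, ← mul_assoc, ← pow_add, Even.neg_one_pow ⟨_, rfl⟩,
    one_mul]

end Matrix

/-- The (i,j) minor (i ≠ j) of `A = c • (u vᵀ - I)` equals
`(-1)^(n-1+i+j) c^(n-1) uⱼvᵢ` (matrix size is `n+1`). -/
theorem stmt_1 (n : ℕ) (c : ℝ) (u v : Fin (n + 1) → ℝ)
    (A : Matrix (Fin (n + 1)) (Fin (n + 1)) ℝ)
    (hA : A = c • (Matrix.vecMulVec u v - 1)) (i j : Fin (n + 1)) (hij : i ≠ j) :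
    (A.submatrix i.succAbove j.succAbove).det
      = (-1 : ℝ) ^ (n + (i : ℕ) + (j : ℕ)) * c ^ n * (u j * v i) := by
  have hn : 2 ≤ Fintype.card (Fin (n + 1)) := Fintype.one_lt_card_iff.mpr ⟨i, j, hij⟩
  have hA' : A = (-c) • (scalar (Fin (n + 1)) (1 : ℝ) - vecMulVec u v) := by
    rw [hA, map_one]
    module
  rw [det_submatrix_succAbove_eq_adjugate, hA', adjugate_smul,
    adjugate_scalar_sub_vecMulVec u v hn, Fintype.card_fin, Nat.add_sub_cancel]
  simp [one_apply_ne hij.symm, vecMulVec_apply]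
  ring
end

section
/- Let Rs be a 4-linear form on a vector space V = F ⊕ G satisfying: (a) Rs(X,Y,Z,W) = −Rs(X,Y,W,Z); (b) the algebraic Bianchi identity Rs(X,Y,Z,W) + Rs(X,Z,W,Y) + Rs(X,W,Y,Z) = 0; (c) Rs(X,Y,Z,W) = Rs(Y,X,Z,W); (d) Rs vanishes whenever the first two arguments both lie in F or both lie in G; (e) Rs vanishes whenever the last two arguments both lie in F or both lie in G. If Rs(X_F, Y_G, Y_G, X_F) = 0 for all X_F ∈ F and Y_G ∈ G, then Rs = 0. -/
/-!
Polarizing `Rs (f, g, g, f) = 0` first in `f ∈ F` and then in `g ∈ G` gives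
`Rs (f, g, f', g') = 0`: in each step the two cross terms agree, because the Bianchi identity
together with (d) lets one swap the two `F`-arguments, resp. the two `G`-arguments, so each
polarization produces twice the wanted value. The symmetries (a), (c) and the vanishing
conditions (d), (e) dispose of every other distribution of the four arguments among `F` and
`G`, and `F ∪ G` spans `V`.
-/

section

variable {R V M : Type*} [CommSemiring R] [AddCommGroup V] [Module R V] [AddCommGroup M]
  [Module R M]

theorem LinearMap.eq_zero_of_span_eq_top₄ {s : Set V} (hs : Submodule.span R s = ⊤)
    {Rs : V →ₗ[R] V →ₗ[R] V →ₗ[R] V →ₗ[R] M}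
    (h : ∀ x ∈ s, ∀ y ∈ s, ∀ z ∈ s, ∀ w ∈ s, Rs x y z w = 0) : Rs = 0 :=
  ext_on hs fun x hx => ext_on hs fun y hy => ext_on hs fun z hz => ext_on hs fun w hw =>
    h x hx y hy z hz w hw

/-- The algebraic symmetries of `Rs (X, Y, Z, W) = ω (R (Z, W) Y, X)` at a point, for the
canonical connection of a bi-Lagrangian structure whose foliations have tangent spaces `F`
and `G` there. -/
structure IsBiLagrangianCurvature (F G : Submodule R V)
    (Rs : V →ₗ[R] V →ₗ[R] V →ₗ[R] V →ₗ[R] M) : Prop where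
  antisymm_right : ∀ X Y Z W, Rs X Y Z W = - Rs X Y W Z
  bianchi : ∀ X Y Z W, Rs X Y Z W + Rs X Z W Y + Rs X W Y Z = 0
  symm_left : ∀ X Y Z W, Rs X Y Z W = Rs Y X Z W
  eq_zero_of_left_mem : ∀ X Y Z W, (X ∈ F ∧ Y ∈ F) ∨ (X ∈ G ∧ Y ∈ G) → Rs X Y Z W = 0
  eq_zero_of_right_mem : ∀ X Y Z W, (Z ∈ F ∧ W ∈ F) ∨ (Z ∈ G ∧ W ∈ G) → Rs X Y Z W = 0

namespace IsBiLagrangianCurvature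

variable {F G : Submodule R V} {Rs : V →ₗ[R] V →ₗ[R] V →ₗ[R] V →ₗ[R] M}
  (h : IsBiLagrangianCurvature F G Rs)
include h

theorem swap_first_third {g g' : V} (hg : g ∈ G) (hg' : g' ∈ G) (f f' : V) :
    Rs f g f' g' = Rs f' g f g' := by
  have bianchi := h.bianchi g f f' g'
  rw [h.eq_zero_of_left_mem g g' f f' (.inr ⟨hg, hg'⟩), add_zero, h.antisymm_right g f' g' f,
    ← sub_eq_add_neg, sub_eq_zero] at bianchi
  rw [h.symm_left f, h.symm_left f', bianchi]

theorem swap_second_fourth {f f' : V} (hf : f ∈ F) (hf' : f' ∈ F) (g g' : V) :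
    Rs f g f' g' = Rs f g' f' g := by
  have bianchi := h.bianchi f g f' g'
  rwa [h.eq_zero_of_left_mem f f' g' g (.inl ⟨hf, hf'⟩), add_zero, h.antisymm_right f g' g f',
    ← sub_eq_add_neg, sub_eq_zero] at bianchi

variable [IsAddTorsionFree M] (h0 : ∀ X ∈ F, ∀ Y ∈ G, Rs X Y Y X = 0)
include h0

theorem apply_eq_zero_of_second_eq_fourth {f f' g : V} (hf : f ∈ F) (hf' : f' ∈ F)
    (hg : g ∈ G) : Rs f g f' g = 0 := by
  have hsum := h0 (f + f') (F.add_mem hf hf') g hg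
  simp only [map_add, LinearMap.add_apply] at hsum
  rw [h0 f hf g hg, h0 f' hf' g hg, zero_add, add_zero, h.antisymm_right f g g f',
    h.antisymm_right f' g g f, h.swap_first_third hg hg f' f, ← neg_add, neg_eq_zero,
    ← two_nsmul] at hsum
  exact two_nsmul_eq_zero.mp hsum

theorem apply_eq_zero_of_mem {f f' g g' : V} (hf : f ∈ F) (hg : g ∈ G) (hf' : f' ∈ F)
    (hg' : g' ∈ G) : Rs f g f' g' = 0 := by
  have hsum := h.apply_eq_zero_of_second_eq_fourth h0 hf hf' (G.add_mem hg hg')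
  simp only [map_add, LinearMap.add_apply] at hsum
  rw [h.apply_eq_zero_of_second_eq_fourth h0 hf hf' hg,
    h.apply_eq_zero_of_second_eq_fourth h0 hf hf' hg', zero_add, add_zero,
    h.swap_second_fourth hf hf' g' g, ← two_nsmul] at hsum
  exact two_nsmul_eq_zero.mp hsum

theorem apply_eq_zero_of_mem_union {x y z w : V} (hx : x ∈ (F ∪ G : Set V))
    (hy : y ∈ (F ∪ G : Set V)) (hz : z ∈ (F ∪ G : Set V)) (hw : w ∈ (F ∪ G : Set V)) :
    Rs x y z w = 0 := by
  have mixed : ∀ {x y}, x ∈ F → y ∈ G → Rs x y z w = 0 := by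
    intro x y hx hy
    rcases hz with hz | hz <;> rcases hw with hw | hw
    · exact h.eq_zero_of_right_mem x y z w (.inl ⟨hz, hw⟩)
    · exact h.apply_eq_zero_of_mem h0 hx hy hz hw
    · rw [h.antisymm_right, h.apply_eq_zero_of_mem h0 hx hy hw hz, neg_zero]
    · exact h.eq_zero_of_right_mem x y z w (.inr ⟨hz, hw⟩)
  rcases hx with hx | hx <;> rcases hy with hy | hy
  · exact h.eq_zero_of_left_mem x y z w (.inl ⟨hx, hy⟩)
  · exact mixed hx hy
  · rw [h.symm_left]
    exact mixed hy hx
  · exact h.eq_zero_of_left_mem x y z w (.inr ⟨hx, hy⟩)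

theorem eq_zero_of_sup_eq_top (hFG : F ⊔ G = ⊤) : Rs = 0 := by
  have hspan : Submodule.span R (F ∪ G : Set V) = ⊤ := by
    rw [Submodule.span_union, Submodule.span_eq, Submodule.span_eq, hFG]
  exact LinearMap.eq_zero_of_span_eq_top₄ hspan fun x hx y hy z hz w hw =>
    h.apply_eq_zero_of_mem_union h0 hx hy hz hw

end IsBiLagrangianCurvature

end

/-- Algebraic core of the flatness criterion: a 4-linear form with the symmetries
(a)–(e) of the symplectic curvature tensor of a bi-Lagrangian structure which has
vanishing "sectional" values `Rs(X_F, Y_G, Y_G, X_F)` vanishes identically. -/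
theorem stmt_9 {V : Type*} [AddCommGroup V] [Module ℝ V]
    (F G : Submodule ℝ V) (hFG : IsCompl F G)
    (Rs : V →ₗ[ℝ] V →ₗ[ℝ] V →ₗ[ℝ] V →ₗ[ℝ] ℝ)
    (ha : ∀ X Y Z W, Rs X Y Z W = - Rs X Y W Z)
    (hb : ∀ X Y Z W, Rs X Y Z W + Rs X Z W Y + Rs X W Y Z = 0)
    (hc : ∀ X Y Z W, Rs X Y Z W = Rs Y X Z W)
    (hd : ∀ X Y Z W, (X ∈ F ∧ Y ∈ F) ∨ (X ∈ G ∧ Y ∈ G) → Rs X Y Z W = 0)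
    (he : ∀ X Y Z W, (Z ∈ F ∧ W ∈ F) ∨ (Z ∈ G ∧ W ∈ G) → Rs X Y Z W = 0)
    (h0 : ∀ X ∈ F, ∀ Y ∈ G, Rs X Y Y X = 0) :
    Rs = 0 :=
  IsBiLagrangianCurvature.eq_zero_of_sup_eq_top ⟨ha, hb, hc, hd, he⟩ h0 hFG.sup_eq_top
end

section
/- Consider the system of two polynomial equations in real variables (ρ₂, σ₂) with parameters n and ρ: 0 = −(n+7)ρ²σ₂² + n³ − 7n² + 7n + 15 and 0 = −9(n+7)ρ²σ₂² + n³ + 21n² − 169n + 291. Any common solution forces 2n³ − 21n² + 58n − 39 = 0, whose only real roots are n = 1, n = 3, and n = 13/2. In particular, for a natural number n ≥ 2 with n ≠ 3 the system has no solution. -/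
/-!
Nine times the first equation minus the second eliminates `ρ²σ₂²` and leaves four times
the cubic `2n³ - 21n² + 58n - 39 = (n - 1)(n - 3)(2n - 13)`.
-/

section Elimination

variable {K : Type*} [Field K] [CharZero K]

lemma cubic_eq_zero_of_system {n ρ σ₂ : K}
    (h₁ : 0 = -(n + 7) * ρ ^ 2 * σ₂ ^ 2 + n ^ 3 - 7 * n ^ 2 + 7 * n + 15)
    (h₂ : 0 = -9 * (n + 7) * ρ ^ 2 * σ₂ ^ 2 + n ^ 3 + 21 * n ^ 2 - 169 * n + 291) :
    2 * n ^ 3 - 21 * n ^ 2 + 58 * n - 39 = 0 := by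
  linear_combination (h₂ - 9 * h₁) / 4

lemma cubic_eq_zero_iff (n : K) :
    2 * n ^ 3 - 21 * n ^ 2 + 58 * n - 39 = 0 ↔ n = 1 ∨ n = 3 ∨ n = 13 / 2 := by
  have hfactor : 2 * n ^ 3 - 21 * n ^ 2 + 58 * n - 39 = (n - 1) * (n - 3) * (2 * n - 13) := by
    ring
  have hhalf : 2 * n - 13 = 0 ↔ n = 13 / 2 := by
    rw [eq_div_iff two_ne_zero, sub_eq_zero, mul_comm]
  rw [hfactor, mul_eq_zero, mul_eq_zero, sub_eq_zero, sub_eq_zero, hhalf, or_assoc]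

end Elimination

lemma cubic_ne_zero_of_natCast {n : ℕ} (hn : 2 ≤ n) (hn3 : n ≠ 3) :
    2 * (n : ℝ) ^ 3 - 21 * (n : ℝ) ^ 2 + 58 * (n : ℝ) - 39 ≠ 0 := by
  rw [Ne, cubic_eq_zero_iff]
  rintro (h | h | h)
  · exact absurd (Nat.cast_eq_one.mp h) (by omega)
  · exact hn3 (by exact_mod_cast h)
  · have h13 : ((2 * n : ℕ) : ℝ) = 13 := by push_cast; linarith
    have : 2 * n = 13 := by exact_mod_cast h13
    omega

/-- Elimination step in the Ricci-flatness analysis of the space of rays: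
the two equations force `2n³ - 21n² + 58n - 39 = 0`, whose real roots are
`1`, `3`, `13/2`; hence for a natural `n ≥ 2`, `n ≠ 3`, the system is unsolvable. -/
theorem stmt_14 :
    (∀ n ρ σ₂ : ℝ,
        ((0 : ℝ) = -(n + 7) * ρ ^ 2 * σ₂ ^ 2 + n ^ 3 - 7 * n ^ 2 + 7 * n + 15 ∧
          (0 : ℝ) = -9 * (n + 7) * ρ ^ 2 * σ₂ ^ 2 + n ^ 3 + 21 * n ^ 2 - 169 * n + 291) →
        2 * n ^ 3 - 21 * n ^ 2 + 58 * n - 39 = 0) ∧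
    (∀ n : ℝ, 2 * n ^ 3 - 21 * n ^ 2 + 58 * n - 39 = 0 ↔ (n = 1 ∨ n = 3 ∨ n = 13 / 2)) ∧
    (∀ n : ℕ, 2 ≤ n → n ≠ 3 → ∀ ρ σ₂ : ℝ,
        ¬((0 : ℝ) = -((n : ℝ) + 7) * ρ ^ 2 * σ₂ ^ 2 + (n : ℝ) ^ 3 - 7 * (n : ℝ) ^ 2
              + 7 * (n : ℝ) + 15 ∧
          (0 : ℝ) = -9 * ((n : ℝ) + 7) * ρ ^ 2 * σ₂ ^ 2 + (n : ℝ) ^ 3 + 21 * (n : ℝ) ^ 2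
              - 169 * (n : ℝ) + 291)) :=
  ⟨fun _ _ _ h => cubic_eq_zero_of_system h.1 h.2, cubic_eq_zero_iff,
    fun _ hn hn3 _ _ h => cubic_ne_zero_of_natCast hn hn3 (cubic_eq_zero_of_system h.1 h.2)⟩
end

section
/- The system of two real polynomial equations 0 = (n²−8n+15)σ⁴ − 16(n²−5n+54)σ² + 48(n²−12n+27) and 0 = (n⁴−11n³+68n²−169n+111)σ⁶ + 12(16n³−41n²+500n−1243)σ⁴ − 16(n⁴+23n³−186n²+1525n−3667)σ² + 192(2n³−21n²+58n−39) has no common real solution σ for any natural number n ≥ 2 with n ≠ 3. -/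
/-!
Put `s = σ²`: the equations become a quadratic `P n s = 0` and a cubic `Q n s = 0` in `s`.
Pseudo-dividing `Q` by `P` leaves `(n - 3)` times a linear polynomial in `s`, and eliminating `s`
between that and `P` yields the resultant `384 (n - 3)² (n - 5)² S(n)`. The integer polynomial `S`
has no root modulo 7, hence no integer root. For `n = 5` the quadratic degenerates to
`-96 (9 s + 4) = 0`, whose root is negative.
-/

namespace RayRicci

variable {R : Type*} [CommRing R]

def P (x s : R) : R :=
  (x ^ 2 - 8 * x + 15) * s ^ 2 - 16 * (x ^ 2 - 5 * x + 54) * s + 48 * (x ^ 2 - 12 * x + 27)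

def Q (x s : R) : R :=
  (x ^ 4 - 11 * x ^ 3 + 68 * x ^ 2 - 169 * x + 111) * s ^ 3
    + 12 * (16 * x ^ 3 - 41 * x ^ 2 + 500 * x - 1243) * s ^ 2
    - 16 * (x ^ 4 + 23 * x ^ 3 - 186 * x ^ 2 + 1525 * x - 3667) * s
    + 192 * (2 * x ^ 3 - 21 * x ^ 2 + 58 * x - 39)

/-- With `remainderConst`, the coefficients of the pseudo-remainder of `Q` by `P` in `s`,
divided by `32 (x - 3)`. -/
def remainderLead (x : R) : R :=
  6 * x ^ 7 - 11 * x ^ 6 + 552 * x ^ 5 - 2545 * x ^ 4 + 26998 * x ^ 3 - 72165 * x ^ 2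
    - 103588 * x + 1035489

def remainderConst (x : R) : R :=
  -24 * x ^ 7 + 324 * x ^ 6 - 2352 * x ^ 5 + 20748 * x ^ 4 - 83448 * x ^ 3 + 636 * x ^ 2
    + 887616 * x - 1708236

def S (x : R) : R :=
  -x ^ 11 - 12 * x ^ 10 - 33 * x ^ 9 - 3118 * x ^ 8 + 82422 * x ^ 7 - 305160 * x ^ 6
    + 441262 * x ^ 5 + 5359716 * x ^ 4 - 49559733 * x ^ 3 + 113970244 * x ^ 2
    + 264026931 * x - 1098424422

theorem remainder_eq_zero_of_P_of_Q {x s : R} (hP : P x s = 0) (hQ : Q x s = 0) :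
    32 * (x - 3) * (remainderLead x * s + remainderConst x) = 0 := by
  unfold P Q at *
  unfold remainderLead remainderConst
  linear_combination (x ^ 2 - 8 * x + 15) ^ 2 * hQ
    - ((x ^ 2 - 8 * x + 15) * (x ^ 4 - 11 * x ^ 3 + 68 * x ^ 2 - 169 * x + 111) * s
      + (x ^ 2 - 8 * x + 15) * 12 * (16 * x ^ 3 - 41 * x ^ 2 + 500 * x - 1243)
      + 16 * (x ^ 2 - 5 * x + 54) * (x ^ 4 - 11 * x ^ 3 + 68 * x ^ 2 - 169 * x + 111)) * hP

theorem resultant_quadratic_linear_eq_zero {a b c u v s : R} (hq : a * s ^ 2 + b * s + c = 0)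
    (hl : u * s + v = 0) : a * v ^ 2 - b * u * v + c * u ^ 2 = 0 := by
  linear_combination u ^ 2 * hq - (a * (u * s - v) + b * u) * hl

theorem resultant_eq_zero {x s : R} (hP : P x s = 0)
    (hL : remainderLead x * s + remainderConst x = 0) :
    384 * ((x - 3) ^ 2 * (x - 5) ^ 2 * S x) = 0 := by
  have hres : 384 * ((x - 3) ^ 2 * (x - 5) ^ 2 * S x) =
      (x ^ 2 - 8 * x + 15) * remainderConst x ^ 2
        - (-16 * (x ^ 2 - 5 * x + 54)) * remainderLead x * remainderConst x
        + 48 * (x ^ 2 - 12 * x + 27) * remainderLead x ^ 2 := by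
    unfold S remainderLead remainderConst; ring
  rw [hres]
  exact resultant_quadratic_linear_eq_zero (by rw [← hP]; unfold P; ring) hL

theorem P_five (s : R) : P 5 s = -96 * (9 * s + 4) := by
  unfold P; ring

theorem S_intCast (k : ℤ) : ((S k : ℤ) : R) = S (k : R) := by
  simp [S]

theorem S_zmod_seven_ne_zero : ∀ y : ZMod 7, S y ≠ 0 := by decide

theorem S_int_ne_zero (k : ℤ) : S k ≠ 0 := fun h =>
  S_zmod_seven_ne_zero k (by rw [← S_intCast, h, Int.cast_zero])

end RayRicci

open RayRicci

theorem stmt_15_general (n : ℕ) (hn3 : n ≠ 3) (σ : ℝ) :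
    ¬((((n : ℝ) ^ 2 - 8 * n + 15) * σ ^ 4 - 16 * ((n : ℝ) ^ 2 - 5 * n + 54) * σ ^ 2
          + 48 * ((n : ℝ) ^ 2 - 12 * n + 27) = 0) ∧
      (((n : ℝ) ^ 4 - 11 * n ^ 3 + 68 * n ^ 2 - 169 * n + 111) * σ ^ 6
          + 12 * (16 * (n : ℝ) ^ 3 - 41 * n ^ 2 + 500 * n - 1243) * σ ^ 4
          - 16 * ((n : ℝ) ^ 4 + 23 * n ^ 3 - 186 * n ^ 2 + 1525 * n - 3667) * σ ^ 2
          + 192 * (2 * (n : ℝ) ^ 3 - 21 * n ^ 2 + 58 * n - 39) = 0)) := by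
  rintro ⟨h₁, h₂⟩
  have hP : P (n : ℝ) (σ ^ 2) = 0 := by rw [← h₁]; unfold P; ring
  have hQ : Q (n : ℝ) (σ ^ 2) = 0 := by rw [← h₂]; unfold Q; ring
  have hn3' : (n : ℝ) - 3 ≠ 0 := sub_ne_zero.mpr (mod_cast hn3)
  by_cases hn5 : (n : ℝ) = 5
  · rw [hn5, P_five] at hP
    nlinarith [sq_nonneg σ]
  have hL : remainderLead (n : ℝ) * σ ^ 2 + remainderConst (n : ℝ) = 0 := by
    simpa [hn3'] using remainder_eq_zero_of_P_of_Q hP hQ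
  have hS : S (n : ℝ) ≠ 0 := by
    rw [← Int.cast_natCast, ← S_intCast]
    exact_mod_cast S_int_ne_zero n
  have hres := resultant_eq_zero hP hL
  simp [hn3', sub_ne_zero.mpr hn5, hS] at hres

/-- The reduced equations from `c₁₂ - c₂₁ = 0` and `c₂₂ = 0` (after setting
`ρ₁ = 0`) have no common real solution `σ` for any natural `n ≥ 2`, `n ≠ 3`. -/
theorem stmt_15 (n : ℕ) (hn : 2 ≤ n) (hn3 : n ≠ 3) (σ : ℝ) :
    ¬((((n : ℝ) ^ 2 - 8 * n + 15) * σ ^ 4 - 16 * ((n : ℝ) ^ 2 - 5 * n + 54) * σ ^ 2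
          + 48 * ((n : ℝ) ^ 2 - 12 * n + 27) = 0) ∧
      (((n : ℝ) ^ 4 - 11 * n ^ 3 + 68 * n ^ 2 - 169 * n + 111) * σ ^ 6
          + 12 * (16 * (n : ℝ) ^ 3 - 41 * n ^ 2 + 500 * n - 1243) * σ ^ 4
          - 16 * ((n : ℝ) ^ 4 + 23 * n ^ 3 - 186 * n ^ 2 + 1525 * n - 3667) * σ ^ 2
          + 192 * (2 * (n : ℝ) ^ 3 - 21 * n ^ 2 + 58 * n - 39) = 0)) :=
  stmt_15_general n hn3 σ
end
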